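/- Let j ∈ ℝ with 2j ∉ ℤ and let p ∈ ℕ. Define a : ℕ → ℂ by a(n) := S(n) / (Γ(j−n+1) · Γ(n−p+1)), where S(n) := ∑_{t=0}^{n} ((−n)_t (−j)_t / ((j−n+1)_t · t!)) (−1)^t. Then the radius of convergence of the power series ∑_{n} a(n) qⁿ equals 1; equivalently, limsup_{n→∞} |a(n)|^{1/n} = 1. -/

import Mathlib

/-- Ascending Pochhammer symbol `(a)_k = a (a+1) ⋯ (a+k-1)`. -/
noncomputable def pochC (a : ℂ) (k : ℕ) : ℂ := ∏ i ∈ Finset.range k, (a + i)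

/-- `S n = ₂F₁(-n, -j; j-n+1 | -1)` (terminating). -/
noncomputable def S (j : ℂ) (n : ℕ) : ℂ :=
  ∑ t ∈ Finset.range (n + 1),
    pochC (-(n : ℂ)) t * pochC (-j) t / (pochC (j - n + 1) t * (Nat.factorial t : ℂ)) * (-1) ^ t

/-!
Multiplying `S j n` by `(j-n+1)_n = Γ(j+1)/Γ(j-n+1)` clears its denominators and leaves the
binomial convolution `c n = kummerSum j n` of `(-j)_t` with the falling factorials of `j`, so
`a n = c n / (Γ(j+1) (n-p)!)`. By Kummer's evaluation `c n = n! [xⁿ] (1 - x²) ^ j`; instead of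
generating functions we use Pascal's rule, which yields `c (n+2) = (n+1)(n-2j) c n` with
`c 0 = 1` and `c 1 = 0`. So `a` vanishes at odd `n`, is nonzero at even `n ≥ p` since `j ∉ ℤ`,
and `|a (n+2) / a n| → 1`. Summing the logarithms of these ratios (Cesàro) turns this into
`|a (2m)| ^ (1/(2m)) → 1`.
-/

open Finset Filter Polynomial
open scoped Topology ENNReal Nat

section CommRing

variable {R : Type*} [CommRing R]

theorem ascPochhammer_eval_eq_mul_descPochhammer_eval (x : R)
    {t n : ℕ} (htn : t ≤ n) :
    (ascPochhammer R n).eval (x - n + 1) =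
      (ascPochhammer R t).eval (x - n + 1) * (descPochhammer R (n - t)).eval x := by
  have h := congrArg (eval (x - n + 1)) (ascPochhammer_mul R t (n - t))
  rw [eval_mul, eval_comp, eval_add, eval_X, eval_natCast, Nat.add_sub_cancel' htn] at h
  rw [← h, descPochhammer_eval_eq_ascPochhammer, Nat.cast_sub htn]
  ring_nf

theorem ascPochhammer_eval_neg_natCast_mul_neg_one_pow (n t : ℕ) :
    (ascPochhammer R t).eval (-(n : R)) * (-1) ^ t = t ! * n.choose t := by
  rw [ascPochhammer_eval_neg_eq_descPochhammer, descPochhammer_eval_eq_descFactorial,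
    Nat.descFactorial_eq_factorial_mul_choose, mul_right_comm, ← mul_pow]
  push_cast
  ring

-- `kummerSum j n = n! [xⁿ] (1 - x) ^ j (1 + x) ^ j`.
noncomputable def kummerSum (j : R) (n : ℕ) : R :=
  ∑ ik ∈ antidiagonal n,
    (n.choose ik.1 : R) * ((ascPochhammer R ik.1).eval (-j) * (descPochhammer R ik.2).eval j)

noncomputable def kummerSumWeighted (j : R) (n : ℕ) : R :=
  ∑ ik ∈ antidiagonal n,
    (n.choose ik.1 : R) *
      (ik.1 * ((ascPochhammer R ik.1).eval (-j) * (descPochhammer R ik.2).eval j))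

theorem kummerSum_succ (j : R) (n : ℕ) :
    kummerSum j (n + 1) = 2 * kummerSumWeighted j n - n * kummerSum j n := by
  rw [kummerSum, sum_antidiagonal_choose_succ_mul
    (fun i k => (ascPochhammer R i).eval (-j) * (descPochhammer R k).eval j), ← sum_add_distrib,
    kummerSumWeighted, kummerSum, mul_sum, mul_sum, ← sum_sub_distrib]
  refine sum_congr rfl fun ⟨i, k⟩ hik => ?_
  obtain rfl : i + k = n := mem_antidiagonal.mp hik
  rw [Nat.choose_symm_of_eq_add rfl, ascPochhammer_succ_eval, descPochhammer_succ_eval]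
  push_cast
  ring

theorem kummerSumWeighted_succ (j : R) (n : ℕ) :
    kummerSumWeighted j (n + 1) = (n + 1) * (kummerSumWeighted j n - j * kummerSum j n) := by
  rw [kummerSumWeighted, Nat.sum_antidiagonal_succ, Nat.cast_zero, zero_mul, mul_zero, zero_add,
    kummerSumWeighted, kummerSum, mul_sum, ← sum_sub_distrib, mul_sum]
  refine sum_congr rfl fun ⟨i, k⟩ _ => ?_
  have hchoose : ((n + 1).choose (i + 1) : R) * (i + 1) = (n + 1) * n.choose i := by
    exact_mod_cast congrArg (Nat.cast : ℕ → R) (Nat.add_one_mul_choose_eq n i).symm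
  simp only [ascPochhammer_succ_eval, Nat.cast_add, Nat.cast_one]
  linear_combination (i - j) * (ascPochhammer R i).eval (-j) * (descPochhammer R k).eval j * hchoose

theorem kummerSum_add_two (j : R) (n : ℕ) :
    kummerSum j (n + 2) = (n + 1) * (n - 2 * j) * kummerSum j n := by
  rw [kummerSum_succ, kummerSumWeighted_succ, kummerSum_succ]
  push_cast
  ring

theorem kummerSum_zero (j : R) : kummerSum j 0 = 1 := by
  simp [kummerSum]

theorem kummerSum_one (j : R) : kummerSum j 1 = 0 := by
  simp [kummerSum, Nat.antidiagonal_succ]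

theorem kummerSum_two_mul_add_one (j : R) (m : ℕ) : kummerSum j (2 * m + 1) = 0 := by
  induction m with
  | zero => exact kummerSum_one j
  | succ m ih => rw [show 2 * (m + 1) + 1 = 2 * m + 1 + 2 by ring, kummerSum_add_two, ih, mul_zero]

theorem kummerSum_two_mul_ne_zero [IsDomain R] [CharZero R] {j : R} (hj : ∀ k : ℕ, j ≠ k)
    (m : ℕ) : kummerSum j (2 * m) ≠ 0 := by
  induction m with
  | zero => simp [kummerSum_zero]
  | succ m ih =>
    rw [show 2 * (m + 1) = 2 * m + 2 by ring, kummerSum_add_two]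
    refine mul_ne_zero (mul_ne_zero (by exact_mod_cast (2 * m).succ_ne_zero) ?_) ih
    rw [Nat.cast_mul, Nat.cast_two, ← mul_sub]
    exact mul_ne_zero two_ne_zero (sub_ne_zero.mpr (hj m).symm)

end CommRing

theorem pochC_eq_ascPochhammer_eval (a : ℂ) (k : ℕ) : pochC a k = (ascPochhammer ℂ k).eval a := by
  induction k with
  | zero => simp [pochC]
  | succ k ih => rw [pochC, prod_range_succ, ← pochC, ih, ascPochhammer_succ_eval]

theorem ascPochhammer_eval_sub_add_one_ne_zero {j : ℂ} (hj : ∀ k : ℕ, j ≠ k) {t n : ℕ}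
    (htn : t ≤ n) : (ascPochhammer ℂ t).eval (j - n + 1) ≠ 0 := by
  rw [Ne, ascPochhammer_eval_eq_zero_iff]
  rintro ⟨k, hk, hkj⟩
  refine hj (n - 1 - k) ?_
  push_cast [Nat.cast_sub (by omega : k ≤ n - 1), Nat.cast_sub (by omega : 1 ≤ n)]
  linear_combination hkj

theorem S_mul_ascPochhammer_eval {j : ℂ} (hj : ∀ k : ℕ, j ≠ k) (n : ℕ) :
    S j n * (ascPochhammer ℂ n).eval (j - n + 1) = kummerSum j n := by
  rw [S, sum_mul, kummerSum, Nat.sum_antidiagonal_eq_sum_range_succ_mk]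
  refine sum_congr rfl fun t ht => ?_
  have htn : t ≤ n := Nat.lt_succ_iff.mp (mem_range.mp ht)
  have hP := ascPochhammer_eval_sub_add_one_ne_zero hj htn
  have hfac : (t ! : ℂ) ≠ 0 := Nat.cast_ne_zero.mpr t.factorial_ne_zero
  simp only [pochC_eq_ascPochhammer_eval]
  rw [ascPochhammer_eval_eq_mul_descPochhammer_eval j htn]
  field_simp
  linear_combination (ascPochhammer ℂ t).eval (-j) * (descPochhammer ℂ (n - t)).eval j *
    ascPochhammer_eval_neg_natCast_mul_neg_one_pow (R := ℂ) n t

theorem S_div_Gamma {j : ℂ} (hj : ∀ k : ℤ, j ≠ k) (n : ℕ) :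
    S j n / Complex.Gamma (j - n + 1) = kummerSum j n / Complex.Gamma (j + 1) := by
  have hpole : ∀ k : ℕ, j - n + 1 ≠ -k := fun k h =>
    hj (n - 1 - k) (by push_cast; linear_combination h)
  have hΓ := Complex.Gamma_ne_zero hpole
  have hP := ascPochhammer_eval_sub_add_one_ne_zero (n := n) (fun k => hj k) le_rfl
  have hrec := Complex.Gamma_add_nat_div_Gamma_eq (n := n) _ hpole
  rw [show j - n + 1 + n = j + 1 by ring, div_eq_iff hΓ] at hrec
  rw [hrec, ← S_mul_ascPochhammer_eval (fun k => hj k), mul_comm (S j n),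
    mul_div_mul_left _ _ hP]

theorem tendsto_div_natCast_of_tendsto_sub {g : ℕ → ℝ} {ℓ : ℝ}
    (h : Tendsto (fun n => g (n + 1) - g n) atTop (𝓝 ℓ)) :
    Tendsto (fun n : ℕ => g n / n) atTop (𝓝 ℓ) := by
  have hsplit : (fun n : ℕ => g n / n) =
      fun n : ℕ => g 0 / n + (n : ℝ)⁻¹ * ∑ i ∈ range n, (g (i + 1) - g i) := by
    ext n
    rw [sum_range_sub]
    ring
  rw [hsplit]
  simpa using (tendsto_const_div_atTop_nhds_zero_nat (g 0)).add h.cesaro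

theorem tendsto_rpow_one_div_of_tendsto_div {u : ℕ → ℝ} {L : ℝ} (hL : 0 < L)
    (hu : ∀ᶠ n in atTop, 0 < u n) (h : Tendsto (fun n => u (n + 1) / u n) atTop (𝓝 L)) :
    Tendsto (fun n : ℕ => u n ^ (1 / (n : ℝ))) atTop (𝓝 L) := by
  have hlog : Tendsto (fun n => Real.log (u (n + 1)) - Real.log (u n)) atTop
      (𝓝 (Real.log L)) := by
    refine ((Real.continuousAt_log hL.ne').tendsto.comp h).congr' ?_
    filter_upwards [hu, (tendsto_add_atTop_nat 1).eventually hu] with n hn hn1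
    exact Real.log_div hn1.ne' hn.ne'
  have hexp := (Real.continuous_exp.tendsto _).comp
    (tendsto_div_natCast_of_tendsto_sub (g := fun n => Real.log (u n)) hlog)
  rw [Real.exp_log hL] at hexp
  refine hexp.congr' ?_
  filter_upwards [hu] with n hn
  rw [Function.comp_apply, Real.rpow_def_of_pos hn, mul_one_div]

theorem limsup_eq_of_tendsto_two_mul {u : ℕ → ℝ≥0∞} {L : ℝ≥0∞}
    (heven : Tendsto (fun m => u (2 * m)) atTop (𝓝 L)) (hodd : ∀ m, u (2 * m + 1) ≤ u (2 * m)) :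
    limsup u atTop = L := by
  refine le_antisymm ?_ ?_
  · calc limsup u atTop ≤ limsup (fun n => u (2 * (n / 2))) atTop :=
          limsup_le_limsup (Eventually.of_forall fun n => ?_)
      _ = L := (heven.comp (Nat.tendsto_div_const_atTop two_ne_zero)).limsup_eq
    dsimp only
    obtain ⟨m, rfl | rfl⟩ := Nat.even_or_odd' n
    · rw [Nat.mul_div_cancel_left m two_pos]
    · rw [show (2 * m + 1) / 2 = m by omega]
      exact hodd m
  · calc L = limsup (fun m => u (2 * m)) atTop := heven.limsup_eq.symm
      _ ≤ limsup u atTop := Tendsto.limsup_comp_le_limsup (v := (2 * ·))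
          (tendsto_id.const_mul_atTop' two_pos)

theorem limsup_ofReal_rpow_one_div_eq_one {u : ℕ → ℝ} (hodd : ∀ m, u (2 * m + 1) = 0)
    (hpos : ∀ᶠ m in atTop, 0 < u (2 * m))
    (h : Tendsto (fun m => u (2 * (m + 1)) / u (2 * m)) atTop (𝓝 1)) :
    limsup (fun n : ℕ => ENNReal.ofReal (u n) ^ (1 / (n : ℝ))) atTop = 1 := by
  refine limsup_eq_of_tendsto_two_mul ?_ fun m => ?_
  · have hroot := (tendsto_rpow_one_div_of_tendsto_div one_pos hpos h).rpow_const
      (p := 1 / 2) (Or.inl one_ne_zero)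
    rw [Real.one_rpow] at hroot
    have hroot' := ENNReal.tendsto_ofReal hroot
    rw [ENNReal.ofReal_one] at hroot'
    refine hroot'.congr' ?_
    filter_upwards [hpos] with m hm
    rw [← Real.rpow_mul hm.le, ← ENNReal.ofReal_rpow_of_pos hm]
    congr 1
    push_cast
    ring
  · rw [hodd m, ENNReal.ofReal_zero, ENNReal.zero_rpow_of_pos (by positivity)]
    exact zero_le

theorem tendsto_add_mul_add_div_add_mul_add_atTop_nhds_one {𝕜 : Type*} [Semifield 𝕜] [CharZero 𝕜]
    [TopologicalSpace 𝕜] [ContinuousSMul ℚ≥0 𝕜] [IsTopologicalSemiring 𝕜] [ContinuousInv₀ 𝕜]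
    (a b c d : 𝕜) :
    Tendsto (fun k : ℕ => (a + k) * (b + k) / ((c + k) * (d + k))) atTop (𝓝 1) := by
  have h := (tendsto_add_mul_div_add_mul_atTop_nhds a c 1 one_ne_zero).mul
    (tendsto_add_mul_div_add_mul_atTop_nhds b d 1 one_ne_zero)
  simp only [one_mul, div_one, mul_one] at h
  simpa only [mul_div_mul_comm] using h

noncomputable def kummerCoeff (j : ℂ) (p n : ℕ) : ℂ :=
  kummerSum j n / (Complex.Gamma (j + 1) * Complex.Gamma ((n : ℂ) - p + 1))

theorem kummerCoeff_two_mul_add_one (j : ℂ) (p m : ℕ) : kummerCoeff j p (2 * m + 1) = 0 := by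
  rw [kummerCoeff, kummerSum_two_mul_add_one, zero_div]

theorem kummerCoeff_two_mul_ne_zero {j : ℂ} (hj : ∀ k : ℤ, j ≠ k) {p m : ℕ} (hm : p ≤ 2 * m) :
    kummerCoeff j p (2 * m) ≠ 0 := by
  have hΓj : Complex.Gamma (j + 1) ≠ 0 :=
    Complex.Gamma_ne_zero fun k h => hj (-k - 1) (by push_cast; linear_combination h)
  have hΓ : Complex.Gamma (((2 * m : ℕ) : ℂ) - p + 1) ≠ 0 := by
    rw [← Nat.cast_sub hm, Complex.Gamma_nat_eq_factorial]
    exact Nat.cast_ne_zero.mpr (Nat.factorial_ne_zero _)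
  exact div_ne_zero (kummerSum_two_mul_ne_zero (fun k => hj k) m) (mul_ne_zero hΓj hΓ)

theorem kummerCoeff_add_two (j : ℂ) {p n : ℕ} (hn : p ≤ n) :
    kummerCoeff j p (n + 2) =
      (1 + n) * (-2 * j + n) / ((2 - p + n) * (1 - p + n)) * kummerCoeff j p n := by
  have hsub : (n : ℂ) - p = ((n - p : ℕ) : ℂ) := (Nat.cast_sub hn).symm
  have h1 : (n : ℂ) - p + 1 ≠ 0 := by
    rw [hsub]
    exact_mod_cast (n - p).succ_ne_zero
  have h2 : (n : ℂ) - p + 1 + 1 ≠ 0 := by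
    rw [hsub]
    exact_mod_cast (n - p + 1).succ_ne_zero
  have hΓ : Complex.Gamma (((n + 2 : ℕ) : ℂ) - p + 1) =
      (2 - p + n) * ((1 - p + n) * Complex.Gamma ((n : ℂ) - p + 1)) := by
    rw [show ((n + 2 : ℕ) : ℂ) - p + 1 = (n - p + 1 + 1) + 1 by push_cast; ring,
      Complex.Gamma_add_one _ h2, Complex.Gamma_add_one _ h1]
    ring
  rw [kummerCoeff, kummerCoeff, kummerSum_add_two, hΓ, div_mul_div_comm]
  congr 1 <;> ring

theorem tendsto_norm_kummerCoeff_two_mul_div {j : ℂ} (hj : ∀ k : ℤ, j ≠ k) (p : ℕ) :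
    Tendsto (fun m => ‖kummerCoeff j p (2 * (m + 1))‖ / ‖kummerCoeff j p (2 * m)‖) atTop
      (𝓝 1) := by
  have hlim := ((tendsto_add_mul_add_div_add_mul_add_atTop_nhds_one (1 : ℂ) (-2 * j) (2 - p)
    (1 - p)).comp (tendsto_id.const_mul_atTop' two_pos)).norm
  rw [norm_one] at hlim
  refine hlim.congr' ?_
  filter_upwards [eventually_ge_atTop p] with m hm
  rw [Function.comp_apply, id_eq, mul_add_one, kummerCoeff_add_two j (by omega), norm_mul,
    mul_div_cancel_right₀ _ (norm_ne_zero_iff.mpr (kummerCoeff_two_mul_ne_zero hj (by omega)))]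

/-- The radius of convergence of the left Wilson matrix element power series is `1`:
`limsup_{n→∞} |a n|^{1/n} = 1`. -/
theorem stmt_6 (j : ℝ) (hj : ∀ m : ℤ, 2 * j ≠ (m : ℝ)) (p : ℕ)
    (a : ℕ → ℂ)
    (ha : ∀ n : ℕ, a n = S (j : ℂ) n /
      (Complex.Gamma ((j : ℂ) - n + 1) * Complex.Gamma ((n : ℂ) - p + 1))) :
    Filter.limsup
      (fun n : ℕ => (ENNReal.ofReal (‖a n‖)) ^ (1 / (n : ℝ)))
      Filter.atTop = 1 := by
  have hjℤ : ∀ k : ℤ, (j : ℂ) ≠ k := fun k h =>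
    hj (2 * k) (by rw [← Complex.ofReal_intCast, Complex.ofReal_inj] at h; push_cast [h]; ring)
  obtain rfl : a = kummerCoeff j p := funext fun n => by
    rw [ha, ← div_div, S_div_Gamma hjℤ, div_div, kummerCoeff]
  refine limsup_ofReal_rpow_one_div_eq_one (fun m => ?_) ?_
    (tendsto_norm_kummerCoeff_two_mul_div hjℤ p)
  · rw [kummerCoeff_two_mul_add_one, norm_zero]
  · filter_upwards [eventually_ge_atTop p] with m hm
    exact norm_pos_iff.mpr (kummerCoeff_two_mul_ne_zero hjℤ (by omega))
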